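/- arXiv:1907.13259 — 7 statements merged into one kernel-verified Lean document; each statement's English description precedes it below -/
import Mathlib

section
/- Let n ≥ 2 and S = (a₁, …, aₙ) be a tuple of positive integers. Define S̄ = (L/a₁, …, L/aₙ) where L = lcm(S). Then applying the bar operation twice gives the normalization of S, i.e., the i-th entry of the double bar of S equals aᵢ / gcd(a₁,…,aₙ). -/
private lemma aux_div_dvd_div {x y L : ℕ} (hL : L ≠ 0) (hxy : x ∣ y) (hyL : y ∣ L) :
    L / y ∣ L / x := by
  obtain ⟨k, hk⟩ := hxy
  have hx0 : x ≠ 0 := by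
    rintro rfl
    simp_all
  have hy0 : y ≠ 0 := by
    intro h; rw [h] at hyL; exact hL (Nat.eq_zero_of_zero_dvd hyL)
  have hk0 : k ≠ 0 := by
    intro h; rw [h, Nat.mul_zero] at hk; exact hy0 hk
  obtain ⟨m, hm⟩ := hyL
  have hLx : L / x = (L / y) * k := by
    subst hm; subst hk
    rw [Nat.mul_div_cancel_left m (Nat.pos_of_ne_zero (by positivity)),
      Nat.mul_assoc, Nat.mul_div_cancel_left _ (Nat.pos_of_ne_zero hx0), Nat.mul_comm]
  exact ⟨k, hLx⟩

/-- applying the bar operation twice gives the normalization of `S`. -/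
theorem bar_bar_eq_normalization (n : ℕ) (hn : 2 ≤ n) (a : Fin n → ℕ) (ha : ∀ i, 0 < a i)
    (b : Fin n → ℕ) (hb : ∀ i, b i = Finset.univ.lcm a / a i) (i : Fin n) :
    Finset.univ.lcm b / b i = a i / Finset.univ.gcd a := by
  have hn0 : 0 < n := by omega
  set L := Finset.univ.lcm a with hLdef
  set d := Finset.univ.gcd a with hddef
  have hai : ∀ j, a j ∣ L := fun j => Finset.dvd_lcm (Finset.mem_univ j)
  have hdai : ∀ j, d ∣ a j := fun j => Finset.gcd_dvd (Finset.mem_univ j)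
  have hL0 : L ≠ 0 := by
    rw [hLdef, Ne, Finset.lcm_eq_zero_iff]
    intro h
    obtain ⟨j, -, hj⟩ := h
    exact (ha j).ne' hj
  have hdL : d ∣ L := (hdai ⟨0, hn0⟩).trans (hai ⟨0, hn0⟩)
  have hbj : ∀ j, b j ∣ L := fun j => by rw [hb]; exact Nat.div_dvd_of_dvd (hai j)
  set M := Finset.univ.lcm b with hMdef
  have hML : M ∣ L := Finset.lcm_dvd fun j _ => hbj j
  -- M ∣ L / d
  have h1 : M ∣ L / d := Finset.lcm_dvd fun j _ => by
    rw [hb]; exact aux_div_dvd_div hL0 (hdai j) (hai j)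
  -- L / d ∣ M
  have hLM : ∀ j, L / M ∣ a j := fun j => by
    have : b j ∣ M := Finset.dvd_lcm (Finset.mem_univ j)
    have h := aux_div_dvd_div hL0 this hML
    rwa [hb, Nat.div_div_self (hai j) hL0] at h
  have h2 : L / M ∣ d := Finset.dvd_gcd fun j _ => hLM j
  have h3 : L / d ∣ M := by
    have := aux_div_dvd_div hL0 h2 hdL
    rwa [Nat.div_div_self hML hL0] at this
  have hM : M = L / d := Nat.dvd_antisymm h1 h3
  -- now compute
  rw [hM, hb]
  have hbi0 : 0 < L / a i := Nat.div_pos (Nat.le_of_dvd (Nat.pos_of_ne_zero hL0) (hai i)) (ha i)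
  have key : L / d = (L / a i) * (a i / d) := by
    rw [Nat.div_mul_div_comm (hai i) (hdai i), Nat.mul_comm L (a i),
      Nat.mul_div_mul_left _ _ (ha i)]
  rw [key, Nat.mul_div_cancel_left _ hbi0]
end

section
/- Let n ≥ 2 and S = (a₁, …, aₙ) be a tuple of positive integers. Define S̄ = (L/a₁, …, L/aₙ) where L = lcm(S). For an index i ∈ {1,…,n}, gcd of the entries of S̄ with the i-th entry omitted is different from 1 if and only if aᵢ does not divide lcm(a₁, …, âᵢ, …, aₙ) (the lcm with the i-th entry omitted). In particular J*(S̄) = J(S). -/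
lemma nat_div_dvd_div {a b m : ℕ} (hab : a ∣ b) (hbm : b ∣ m) : m / b ∣ m / a := by
  obtain ⟨k, rfl⟩ := hab
  have ham : a ∣ m := (dvd_mul_right a k).trans hbm
  have hk : k ∣ m / a := (Nat.dvd_div_iff_mul_dvd ham).mpr hbm
  rw [← Nat.div_div_eq_div_mul]
  exact Nat.div_dvd_of_dvd hk

lemma gcd_div_eq_div_lcm {ι : Type*} [DecidableEq ι] (T : Finset ι) (hT : T.Nonempty)
    (a : ι → ℕ) (m : ℕ) (h : ∀ j ∈ T, a j ∣ m) :
    T.gcd (fun j => m / a j) = m / T.lcm a := by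
  induction hT using Finset.Nonempty.cons_induction with
  | singleton j => simp
  | cons j T hj hT ih =>
    rw [Finset.cons_eq_insert, Finset.gcd_insert, Finset.lcm_insert,
      ih (fun k hk => h k (Finset.mem_cons_of_mem hk))]
    have haj : a j ∣ m := h j (Finset.mem_cons_self _ _)
    have hl : T.lcm a ∣ m := Finset.lcm_dvd (fun k hk => h k (Finset.mem_cons_of_mem hk))
    rcases Nat.eq_zero_or_pos m with rfl | hm
    · simp
    set g := Nat.gcd (m / a j) (m / T.lcm a) with hg
    have hgdvd : g ∣ m := (Nat.gcd_dvd_left _ _).trans (Nat.div_dvd_of_dvd haj)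
    apply Nat.dvd_antisymm
    · have hp : a j ∣ m / g := (Nat.dvd_div_iff_mul_dvd hgdvd).mpr (by
        have := (Nat.dvd_div_iff_mul_dvd haj).mp (Nat.gcd_dvd_left (m / a j) (m / T.lcm a))
        rwa [mul_comm] at this)
      have hq : T.lcm a ∣ m / g := (Nat.dvd_div_iff_mul_dvd hgdvd).mpr (by
        have := (Nat.dvd_div_iff_mul_dvd hl).mp (Nat.gcd_dvd_right (m / a j) (m / T.lcm a))
        rwa [mul_comm] at this)
      have hlcm : Nat.lcm (a j) (T.lcm a) ∣ m / g := Nat.lcm_dvd hp hq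
      have hmul : g * Nat.lcm (a j) (T.lcm a) ∣ m :=
        (Nat.dvd_div_iff_mul_dvd hgdvd).mp hlcm
      have hlm : Nat.lcm (a j) (T.lcm a) ∣ m := (dvd_mul_left _ g).trans hmul
      exact (Nat.dvd_div_iff_mul_dvd hlm).mpr (by rwa [mul_comm] at hmul)
    · apply Nat.dvd_gcd
      · exact nat_div_dvd_div (Nat.dvd_lcm_left (a j) (T.lcm a)) (Nat.lcm_dvd haj hl)
      · exact nat_div_dvd_div (Nat.dvd_lcm_right (a j) (T.lcm a)) (Nat.lcm_dvd haj hl)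

/-- `gcd((S̄)ᵢ) ≠ 1 ↔ aᵢ ∤ lcm(Sᵢ)`; in particular `J*(S̄) = J(S)`. -/
theorem gcd_bar_erase_ne_one_iff (n : ℕ) (hn : 2 ≤ n) (a : Fin n → ℕ) (ha : ∀ i, 0 < a i)
    (i : Fin n) :
    (Finset.univ.erase i).gcd (fun j => Finset.univ.lcm a / a j) ≠ 1 ↔
      ¬ a i ∣ (Finset.univ.erase i).lcm a := by
  set L := Finset.univ.lcm a with hL
  set T := (Finset.univ : Finset (Fin n)).erase i with hT
  have hTne : T.Nonempty := by
    have : Nontrivial (Fin n) := Fin.nontrivial_iff_two_le.mpr hn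
    obtain ⟨j, hj⟩ := exists_ne i
    exact ⟨j, Finset.mem_erase.mpr ⟨hj, Finset.mem_univ _⟩⟩
  have hdvd : ∀ j ∈ T, a j ∣ L := fun j _ => Finset.dvd_lcm (Finset.mem_univ _)
  have hLpos : 0 < L := by
    rw [hL]
    rw [Nat.pos_iff_ne_zero]
    intro h0
    rcases (Finset.lcm_eq_zero_iff).mp h0 with ⟨j, _, hj⟩
    exact (ha j).ne' hj
  rw [gcd_div_eq_div_lcm T hTne a L hdvd]
  have hTl : T.lcm a ∣ L := Finset.lcm_dvd hdvd
  have hTlpos : 0 < T.lcm a := by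
    rw [Nat.pos_iff_ne_zero]
    intro h0
    rcases (Finset.lcm_eq_zero_iff).mp h0 with ⟨j, _, hj⟩
    exact (ha j).ne' hj
  constructor
  · intro h hdi
    apply h
    have : L ∣ T.lcm a := Finset.lcm_dvd (fun j _ => by
      by_cases hji : j = i
      · subst hji; exact hdi
      · exact Finset.dvd_lcm (Finset.mem_erase.mpr ⟨hji, Finset.mem_univ _⟩))
    have heq : T.lcm a = L := Nat.dvd_antisymm hTl this
    rw [heq, Nat.div_self hLpos]
  · intro h h1
    apply h
    have heq : T.lcm a = L := by
      rcases hTl with ⟨k, hk⟩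
      have : k = 1 := by
        rw [hk, Nat.mul_div_cancel_left _ hTlpos] at h1
        exact h1
      rw [hk, this, mul_one]
    rw [heq]
    exact Finset.dvd_lcm (Finset.mem_univ _)
end

section
/- Let S = (a₁,…,aₙ) and S' = (a₁',…,aₙ') be tuples of positive integers (n ≥ 3) with S ≤¹ S', and set k = a₁'/a₁. Writing (d₁,…,dₙ) = (lcm(S)/a₁,…,lcm(S)/aₙ) and (d₁',…,dₙ') = (lcm(S')/a₁',…,lcm(S')/aₙ'), we have d₁' = d₁, dⱼ' = k·dⱼ for all j ≥ 2, and gcd(d₁, k) = 1. -/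
/-- `S ≤ⁱ S'` iff `Sᵢ = S'ᵢ`, `gᵢ(S') ∣ aᵢ` and `aᵢ ∣ aᵢ'`, where `gᵢ(T) = gcd(tᵢ, lcm(Tᵢ))`. -/
def leIdx {n : ℕ} (i : Fin n) (a a' : Fin n → ℕ) : Prop :=
  (∀ j, j ≠ i → a j = a' j) ∧
  Nat.gcd (a' i) ((Finset.univ.erase i).lcm a') ∣ a i ∧ a i ∣ a' i

/-- if `S ≤¹ S'` and `k = a₁'/a₁` then `d₁' = d₁`, `dⱼ' = k·dⱼ` for `j ≥ 2`,
and `gcd(d₁, k) = 1`. -/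
theorem bar_of_leIdx_first (n : ℕ) (hn : 3 ≤ n) (a a' : Fin n → ℕ)
    (ha : ∀ i, 0 < a i) (ha' : ∀ i, 0 < a' i)
    (i0 : Fin n) (hi0 : i0 = ⟨0, by omega⟩) (h : leIdx i0 a a')
    (k : ℕ) (hk : k = a' i0 / a i0)
    (d d' : Fin n → ℕ) (hd : ∀ j, d j = Finset.univ.lcm a / a j)
    (hd' : ∀ j, d' j = Finset.univ.lcm a' / a' j) :
    d' i0 = d i0 ∧ (∀ j, j ≠ i0 → d' j = k * d j) ∧ Nat.gcd (d i0) k = 1 := by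
  obtain ⟨heq, hgdvd, hdvd⟩ := h
  set L : ℕ := (Finset.univ.erase i0).lcm a' with hL
  have hLa : (Finset.univ.erase i0).lcm a = L := by
    apply Finset.lcm_congr rfl
    intro j hj
    exact heq j (Finset.ne_of_mem_erase hj)
  set g : ℕ := Nat.gcd (a i0) L with hg
  have hgg' : Nat.gcd (a' i0) L = g := by
    apply Nat.dvd_antisymm
    · exact Nat.dvd_gcd hgdvd (Nat.gcd_dvd_right _ _)
    · exact Nat.dvd_gcd ((Nat.gcd_dvd_left _ _).trans hdvd) (Nat.gcd_dvd_right _ _)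
  have hM : Finset.univ.lcm a = Nat.lcm (a i0) L := by
    rw [← lcm_eq_nat_lcm, ← hLa, ← Finset.lcm_insert, Finset.insert_erase (Finset.mem_univ i0)]
  have hM' : Finset.univ.lcm a' = Nat.lcm (a' i0) L := by
    rw [← lcm_eq_nat_lcm, ← Finset.lcm_insert, Finset.insert_erase (Finset.mem_univ i0)]
  have hgpos : 0 < g := Nat.gcd_pos_of_pos_left L (ha i0)
  have hgL : g ∣ L := Nat.gcd_dvd_right _ _
  have hkai0 : a' i0 = k * a i0 := by
    rw [hk, Nat.div_mul_cancel hdvd]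
  -- lcm(a i0, L) = a i0 * (L / g)
  have hlcm : Nat.lcm (a i0) L = a i0 * (L / g) := by
    have h1 : Nat.lcm (a i0) L * g = (a i0 * (L / g)) * g := by
      rw [mul_assoc, Nat.div_mul_cancel hgL, mul_comm (Nat.lcm (a i0) L) g]
      exact Nat.gcd_mul_lcm _ _
    exact Nat.eq_of_mul_eq_mul_right hgpos h1
  have hlcm' : Nat.lcm (a' i0) L = k * (a i0 * (L / g)) := by
    have hgL' : Nat.gcd (a' i0) L ∣ L := Nat.gcd_dvd_right _ _
    have h1 : Nat.lcm (a' i0) L * g = (k * (a i0 * (L / g))) * g := by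
      rw [mul_assoc, mul_assoc, Nat.div_mul_cancel hgL]
      rw [← hgg', mul_comm (Nat.lcm _ _), Nat.gcd_mul_lcm, hkai0, mul_assoc]
    exact Nat.eq_of_mul_eq_mul_right hgpos h1
  have hMM' : Finset.univ.lcm a' = k * Finset.univ.lcm a := by
    rw [hM, hM', hlcm, hlcm']
  have hdi0 : d i0 = L / g := by
    rw [hd, hM, hlcm, Nat.mul_div_cancel_left _ (ha i0)]
  have hkpos : 0 < k := by
    rw [hk]; exact Nat.div_pos (Nat.le_of_dvd (ha' i0) hdvd) (ha i0)
  refine ⟨?_, ?_, ?_⟩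
  · rw [hd', hdi0, hM', hlcm', hkai0, ← mul_assoc, Nat.mul_div_cancel_left _ (Nat.mul_pos hkpos (ha i0))]
  · intro j hj
    have haj : a j ∣ Finset.univ.lcm a := Finset.dvd_lcm (Finset.mem_univ j)
    rw [hd', hd, hMM', ← heq j hj, Nat.mul_div_assoc k haj]
  · rw [hdi0]
    have hco : Nat.Coprime (a' i0 / g) (L / g) := by
      have := Nat.coprime_div_gcd_div_gcd (m := a' i0) (n := L) (by rw [hgg']; exact hgpos)
      rwa [hgg'] at this
    have hkd : k ∣ a' i0 / g := by
      have hga : g ∣ a i0 := Nat.gcd_dvd_left _ _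
      refine ⟨a i0 / g, ?_⟩
      rw [hkai0, Nat.mul_div_assoc k hga]
    exact ((Nat.Coprime.coprime_dvd_left hkd hco).symm : Nat.Coprime (L/g) k)
end

section
/- Let B be an integral domain, x, y relatively prime elements of B, and A a factorially closed subring of B containing x and y. Then x and y are relatively prime in A. -/
/-- `x, y` are relatively prime in `R`: `xR ∩ yR = xyR`, and if either is `0` then
one of them is a unit. -/
def RelPrimePair {R : Type*} [CommRing R] (x y : R) : Prop :=
  ({z : R | x ∣ z} ∩ {z : R | y ∣ z} = {z : R | x * y ∣ z}) ∧
  ((x = 0 ∨ y = 0) → (IsUnit x ∨ IsUnit y))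

/-- relatively prime elements of `B` lying in a factorially closed
subring `A` are relatively prime in `A`. -/
theorem relPrimePair_factoriallyClosed (B : Type*) [CommRing B] [IsDomain B]
    (A : Subring B) (hA : ∀ x y : B, x ≠ 0 → y ≠ 0 → x * y ∈ A → x ∈ A ∧ y ∈ A)
    (x y : B) (hx : x ∈ A) (hy : y ∈ A) (h : RelPrimePair x y) :
    RelPrimePair (⟨x, hx⟩ : A) (⟨y, hy⟩ : A) := by
  obtain ⟨h1, h2⟩ := h
  have key : ∀ z : B, x ∣ z ∧ y ∣ z ↔ x * y ∣ z := by
    intro z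
    have := Set.ext_iff.mp h1 z
    simpa using this
  constructor
  · ext z
    simp only [Set.mem_inter_iff, Set.mem_setOf_eq]
    constructor
    · rintro ⟨⟨a, ha⟩, ⟨b, hb⟩⟩
      -- in B
      have hxz : x ∣ (z : B) := ⟨a, congrArg Subtype.val ha⟩
      have hyz : y ∣ (z : B) := ⟨b, congrArg Subtype.val hb⟩
      have hxy : x * y ∣ (z : B) := (key z).mp ⟨hxz, hyz⟩
      obtain ⟨c, hc⟩ := hxy
      by_cases hz0 : (z : B) = 0
      · refine ⟨0, ?_⟩
        ext; simp [hz0]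
      · have hxy0 : x * y ≠ 0 := fun h0 => hz0 (by simp [hc, h0])
        have hc0 : c ≠ 0 := fun h0 => hz0 (by simp [hc, h0])
        have hcA : c ∈ A := (hA (x * y) c hxy0 hc0 (hc ▸ z.2)).2
        exact ⟨⟨c, hcA⟩, by ext; exact hc⟩
    · rintro ⟨c, hc⟩
      exact ⟨⟨⟨y, hy⟩ * c, by rw [hc]; ring⟩, ⟨⟨x, hx⟩ * c, by rw [hc]; ring⟩⟩
  · intro h0
    have h0' : x = 0 ∨ y = 0 := by
      rcases h0 with h0 | h0
      · exact Or.inl (congrArg Subtype.val h0)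
      · exact Or.inr (congrArg Subtype.val h0)
    have hu := h2 h0'
    have mkUnit : ∀ (w : B) (hw : w ∈ A), IsUnit w → IsUnit (⟨w, hw⟩ : A) := by
      intro w hw hwu
      obtain ⟨u, rfl⟩ := hwu
      have hw0 : (u : B) ≠ 0 := u.ne_zero
      have hi0 : ((u⁻¹ : Bˣ) : B) ≠ 0 := (u⁻¹).ne_zero
      have hinvA : ((u⁻¹ : Bˣ) : B) ∈ A := by
        have : (u : B) * ((u⁻¹ : Bˣ) : B) ∈ A := by
          rw [Units.mul_inv]; exact A.one_mem
        exact (hA _ _ hw0 hi0 this).2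
      refine ⟨⟨⟨(u : B), hw⟩, ⟨((u⁻¹ : Bˣ) : B), hinvA⟩, ?_, ?_⟩, rfl⟩
      · ext; simp
      · ext; simp
    rcases hu with hu | hu
    · exact Or.inl (mkUnit x hx hu)
    · exact Or.inr (mkUnit y hy hu)
end

section
/- Let B be an integral domain of characteristic zero and D : B → B a nonzero locally nilpotent derivation with kernel A. Then A is factorially closed in B: for nonzero x, y ∈ B, if xy ∈ A then x ∈ A and y ∈ A. -/
open Finset

private lemma D_mul' {B : Type*} [CommRing B] (D : Derivation ℤ B B) (p q : B) :
    D (p * q) = D p * q + p * D q := by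
  rw [D.leibniz]; simp [smul_eq_mul]; ring

private lemma iter_leibniz {B : Type*} [CommRing B] (D : Derivation ℤ B B) (n : ℕ) (p q : B) :
    (⇑D)^[n] (p * q) =
      ∑ k ∈ range n.succ, (n.choose k • ((⇑D)^[n - k] p * (⇑D)^[k] q)) := by
  induction n with
  | zero => simp [Finset.range]
  | succ n IH =>
    calc
      (⇑D)^[n + 1] (p * q) =
          D (∑ k ∈ range n.succ,
              n.choose k • ((⇑D)^[n - k] p * (⇑D)^[k] q)) := by
        rw [Function.iterate_succ_apply', IH]
      _ = (∑ k ∈ range n.succ,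
            n.choose k • ((⇑D)^[n - k + 1] p * (⇑D)^[k] q)) +
          ∑ k ∈ range n.succ,
            n.choose k • ((⇑D)^[n - k] p * (⇑D)^[k + 1] q) := by
        rw [map_sum]
        simp_rw [map_nsmul, D_mul', Function.iterate_succ_apply',
          smul_add, sum_add_distrib]
      _ = (∑ k ∈ range n.succ,
                n.choose k.succ • ((⇑D)^[n - k] p * (⇑D)^[k + 1] q)) +
              1 • ((⇑D)^[n + 1] p * (⇑D)^[0] q) +
            ∑ k ∈ range n.succ, n.choose k • ((⇑D)^[n - k] p * (⇑D)^[k + 1] q) :=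
        ?_
      _ = ((∑ k ∈ range n.succ, n.choose k • ((⇑D)^[n - k] p * (⇑D)^[k + 1] q)) +
              ∑ k ∈ range n.succ,
                n.choose k.succ • ((⇑D)^[n - k] p * (⇑D)^[k + 1] q)) +
            1 • ((⇑D)^[n + 1] p * (⇑D)^[0] q) := by
        rw [add_comm, add_assoc]
      _ = (∑ i ∈ range n.succ,
              (n + 1).choose (i + 1) • ((⇑D)^[n + 1 - (i + 1)] p * (⇑D)^[i + 1] q)) +
            1 • ((⇑D)^[n + 1] p * (⇑D)^[0] q) := by
        simp_rw [Nat.choose_succ_succ, Nat.succ_sub_succ, add_smul, sum_add_distrib]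
      _ = ∑ k ∈ range n.succ.succ,
            n.succ.choose k • ((⇑D)^[n.succ - k] p * (⇑D)^[k] q) := by
        rw [sum_range_succ' _ n.succ, Nat.choose_zero_right, tsub_zero]
    congr
    refine (sum_range_succ' _ _).trans (congr_arg₂ (· + ·) ?_ ?_)
    · rw [sum_range_succ, Nat.choose_succ_self, zero_smul, add_zero]
      refine sum_congr rfl fun k hk => ?_
      rw [mem_range] at hk
      congr
      omega
    · rw [Nat.choose_zero_right, tsub_zero]

/-- the kernel of a nonzero locally nilpotent derivation on a domain of
characteristic zero is factorially closed. -/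
theorem lnd_kernel_factoriallyClosed (B : Type*) [CommRing B] [IsDomain B] [CharZero B]
    (D : Derivation ℤ B B) (hD : D ≠ 0)
    (hln : ∀ b : B, ∃ n : ℕ, (⇑D)^[n] b = 0)
    (x y : B) (hx : x ≠ 0) (hy : y ≠ 0) (hxy : D (x * y) = 0) :
    D x = 0 ∧ D y = 0 := by
  -- minimal degrees
  have hexx := hln x
  have hexy := hln y
  classical
  set m := Nat.find hexx with hm
  set n := Nat.find hexy with hn
  have hmx : (⇑D)^[m] x = 0 := Nat.find_spec hexx
  have hny : (⇑D)^[n] y = 0 := Nat.find_spec hexy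
  have hm0 : m ≠ 0 := by
    intro h; apply hx; simpa [h] using hmx
  have hn0 : n ≠ 0 := by
    intro h; apply hy; simpa [h] using hny
  have hmx' : (⇑D)^[m - 1] x ≠ 0 := Nat.find_min hexx (by omega)
  have hny' : (⇑D)^[n - 1] y ≠ 0 := Nat.find_min hexy (by omega)
  -- all positive iterates of x*y vanish
  have hiter : ∀ k : ℕ, (⇑D)^[k + 1] (x * y) = 0 := by
    intro k
    induction k with
    | zero => simpa using hxy
    | succ k ih => rw [Function.iterate_succ_apply', ih, map_zero]
  -- key: m - 1 + n - 1 must be 0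
  have key : (m - 1) + (n - 1) = 0 := by
    by_contra h
    set N := (m - 1) + (n - 1) with hN
    have hNpos : 1 ≤ N := by omega
    have h0 : (⇑D)^[N] (x * y) = 0 := by
      have := hiter (N - 1); rwa [Nat.sub_add_cancel hNpos] at this
    rw [iter_leibniz] at h0
    -- all terms except k = n - 1 vanish
    have h1 : ∀ k ∈ range N.succ, k ≠ n - 1 →
        N.choose k • ((⇑D)^[N - k] x * (⇑D)^[k] y) = 0 := by
      intro k hk hkne
      rcases lt_or_gt_of_ne hkne with hlt | hgt
      · have : (⇑D)^[N - k] x = 0 := by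
          have : (⇑D)^[(N - k) - m] ((⇑D)^[m] x) = 0 := by rw [hmx]; simp
          rwa [← Function.iterate_add_apply, Nat.sub_add_cancel (by omega)] at this
        simp [this]
      · have : (⇑D)^[k] y = 0 := by
          have : (⇑D)^[k - n] ((⇑D)^[n] y) = 0 := by rw [hny]; simp
          rwa [← Function.iterate_add_apply, Nat.sub_add_cancel (by omega)] at this
        simp [this]
    rw [Finset.sum_eq_single (n - 1) h1 (by intro h'; exact absurd (mem_range.mpr (by omega)) h')]
      at h0
    have hsub : N - (n - 1) = m - 1 := by omega
    rw [hsub] at h0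
    have hchoose : (N.choose (n - 1) : B) ≠ 0 := by
      exact_mod_cast (Nat.choose_pos (show n - 1 ≤ N by omega)).ne'
    rw [nsmul_eq_mul] at h0
    rcases mul_eq_zero.mp h0 with h' | h'
    · exact hchoose h'
    · rcases mul_eq_zero.mp h' with h'' | h''
      · exact hmx' h''
      · exact hny' h''
  have hm1 : m = 1 := by omega
  have hn1 : n = 1 := by omega
  constructor
  · have := hmx; rw [hm1] at this; simpa using this
  · have := hny; rw [hn1] at this; simpa using this
end

section
/- Let B be an integral domain containing ℚ and D : B → B a nonzero locally nilpotent derivation with kernel A. Then D has a preslice: there exists t ∈ B with D(t) ≠ 0 and D²(t) = 0. Moreover, setting α = D(t) ∈ A, the localization B_α equals A_α[t], a polynomial ring in the variable t over A_α. -/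
/-!
Let `b` be an element with `D b ≠ 0`; the last nonzero term of `b, D b, D² b, …` is `D t` for a
preslice `t`. Put `α = D t`. Since a localization is formally étale, `D` extends to `B_α`, and the
extension kills `A_α`. Differentiating a relation `p(t) = 0` over `A_α` of minimal degree gives
`p'(t) α = 0`, so `t` is transcendental. For generation, induct on the least `m` with
`D^[m+1] b = 0`: with `a = D^[m] b` the element `α^m b - a t^m / m!` is killed by `D^[m]`, because
`D^[m] (t^m) = m! α^m`.
-/

open Polynomial

namespace Derivation

section Localization

variable {R B L : Type*} [CommRing R] [CommRing B] [CommRing L] [Algebra R B] [Algebra R L]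
  [Algebra B L] [IsScalarTower R B L] (M : Submonoid B) [IsLocalization M L]

noncomputable def extendToLocalization (D : Derivation R B B) : Derivation R L L :=
  have := Algebra.FormallyEtale.of_isLocalization (Rₘ := L) M
  ((LinearMap.liftBaseChange L ((Algebra.linearMap B L).compDer D).liftKaehlerDifferential).comp
    (KaehlerDifferential.tensorKaehlerEquivOfFormallyEtale R B L).symm.toLinearMap).compDer
    (KaehlerDifferential.D R L)

theorem extendToLocalization_algebraMap (D : Derivation R B B) (b : B) :
    D.extendToLocalization M (algebraMap B L b) = algebraMap B L (D b) := by
  have := Algebra.FormallyEtale.of_isLocalization (Rₘ := L) M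
  simp [extendToLocalization,
    KaehlerDifferential.tensorKaehlerEquivOfFormallyEtale_symm_D_algebraMap]

end Localization

section

variable {B : Type*} [CommRing B] (D : Derivation ℤ B B)

theorem map_algebraMap_rat [Algebra ℚ B] (q : ℚ) : D (algebraMap ℚ B q) = 0 := by
  rw [Algebra.algebraMap_eq_smul_one, map_rat_smul, D.map_one_eq_zero, smul_zero]

theorem iterate_mul_of_map_eq_zero {a : B} (ha : D a = 0) (k : ℕ) (x : B) :
    D^[k] (a * x) = a * D^[k] x := by
  induction k generalizing x with
  | zero => rfl
  | succ k ih =>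
    simp only [Function.iterate_succ_apply', ih, leibniz, ha, smul_eq_mul, mul_zero, add_zero]

theorem iterate_pow_eq_factorial_mul {t : B} (ht : D (D t) = 0) (n : ℕ) :
    D^[n] (t ^ n) = n.factorial * D t ^ n := by
  induction n with
  | zero => simp
  | succ n ih =>
    have hker : D ((n + 1 : ℕ) * D t) = 0 := by simp [leibniz, ht]
    have hstep : D (t ^ (n + 1)) = ((n + 1 : ℕ) * D t) * t ^ n := by
      rw [leibniz_pow, add_tsub_cancel_right, smul_eq_mul, nsmul_eq_mul]
      ring
    rw [Function.iterate_succ_apply, hstep, D.iterate_mul_of_map_eq_zero hker, ih,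
      Nat.factorial_succ]
    push_cast
    ring

theorem map_aeval_of_le_ker {S : Subring B} (hS : ∀ s ∈ S, D s = 0) (p : S[X]) (x : B) :
    D (aeval x p) = aeval x (derivative p) * D x := by
  have hC (a : S) : D (algebraMap S B a) = 0 := hS a a.2
  induction p using Polynomial.induction_on with
  | C a => simp [hC]
  | add p q hp hq => simp [hp, hq, add_mul]
  | monomial n a _ =>
    simp only [map_mul, aeval_C, map_pow, aeval_X, leibniz, leibniz_pow, add_tsub_cancel_right,
      smul_eq_mul, nsmul_eq_mul, Nat.cast_add, Nat.cast_one, hC, mul_zero, add_zero,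
      derivative_mul, derivative_C, zero_mul, derivative_X_pow_succ, map_add, _root_.map_natCast,
      map_one, zero_add]
    ring

theorem transcendental_of_le_ker [IsDomain B] [CharZero B] {S : Subring B}
    (hS : ∀ s ∈ S, D s = 0) {x : B} (hx : D x ≠ 0) : Transcendental S x := by
  rw [transcendental_iff]
  intro p
  induction h : p.natDegree using Nat.strong_induction_on generalizing p with
  | _ n ih =>
  intro hp
  have hp' : aeval x (derivative p) = 0 := by
    simpa [hp, hx] using (D.map_aeval_of_le_ker hS p x).symm
  obtain h0 | h0 := eq_or_ne p.natDegree 0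
  · rw [Polynomial.eq_C_of_natDegree_eq_zero h0] at hp ⊢
    simpa using hp
  · have := ih _ (h ▸ natDegree_derivative_lt h0) _ rfl hp'
    exact absurd (derivative_eq_zero.mp this) h0

theorem exists_preslice_of_map_ne_zero {b : B} (hb : D b ≠ 0) (hnil : ∃ n, D^[n] b = 0) :
    ∃ t : B, D t ≠ 0 ∧ D (D t) = 0 := by
  classical
  have hex : ∃ k, D^[k + 2] b = 0 := by
    obtain ⟨n, hn⟩ := hnil
    exact ⟨n, by rw [add_comm, Function.iterate_add_apply, hn, iterate_map_zero]⟩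
  refine ⟨D^[Nat.find hex] b, ?_, ?_⟩
  · rw [← Function.iterate_succ_apply' D]
    cases h : Nat.find hex with
    | zero => simpa using hb
    | succ k => exact Nat.find_min hex (h ▸ k.lt_succ_self)
  · simpa only [← Function.iterate_succ_apply'] using Nat.find_spec hex

theorem algebraMap_mem_adjoin_of_iterate_eq_zero [Algebra ℚ B] {L : Type*} [CommRing L]
    [Algebra B L] {t : B} (ht : D (D t) = 0) {A' : Subring L}
    (hker : ∀ a, D a = 0 → algebraMap B L a ∈ A') {u : L} (hu : algebraMap B L (D t) * u = 1)
    (huA : u ∈ A') (m : ℕ) :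
    ∀ b, D^[m] b = 0 → algebraMap B L b ∈ Algebra.adjoin A' {algebraMap B L t} := by
  set φ := algebraMap B L
  have hA'R (x : L) (hx : x ∈ A') : x ∈ Algebra.adjoin A' {φ t} :=
    Subalgebra.algebraMap_mem _ (⟨x, hx⟩ : A')
  have htR : φ t ∈ Algebra.adjoin A' {φ t} := Algebra.subset_adjoin (Set.mem_singleton _)
  induction m with
  | zero => rintro b rfl; simp
  | succ m ih =>
    intro b hb
    set a := D^[m] b
    set q := algebraMap ℚ B (m.factorial : ℚ)⁻¹
    have ha : D a = 0 := by rwa [← Function.iterate_succ_apply' D]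
    have hqa : D (q * a) = 0 := by simp [leibniz, ha, q, map_algebraMap_rat]
    have hq : q * m.factorial = 1 := by
      rw [← _root_.map_natCast (algebraMap ℚ B), ← map_mul, inv_mul_cancel₀ (by positivity),
        map_one]
    have hc : D^[m] (D t ^ m * b - q * a * t ^ m) = 0 := by
      have hDt : D (D t ^ m) = 0 := by simp [leibniz_pow, ht]
      rw [iterate_map_sub, D.iterate_mul_of_map_eq_zero hDt, D.iterate_mul_of_map_eq_zero hqa,
        D.iterate_pow_eq_factorial_mul ht]
      linear_combination (-(a * D t ^ m)) * hq
    have hb : φ b = u ^ m * (φ (D t ^ m * b - q * a * t ^ m) + φ (q * a) * φ t ^ m) := by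
      simp only [map_sub, map_mul, map_pow]
      linear_combination (-φ b) * (congrArg (· ^ m) hu)
    rw [hb]
    exact mul_mem (pow_mem (hA'R u huA) m) (add_mem (ih _ hc)
      (mul_mem (hA'R _ (hker _ hqa)) (pow_mem htR m)))

variable (L : Type*) [CommRing L] [Algebra B L]

/-- The subring `A_α` of `B_α`, where `A = ker D`. -/
def localizedKer (α : B) [IsLocalization.Away α L] : Subring L :=
  Subring.closure (algebraMap B L '' {b | D b = 0} ∪ {IsLocalization.Away.invSelf α})

variable {L} {α : B} [IsLocalization.Away α L]

theorem extendToLocalization_localizedKer (hα : D α = 0) {x : L}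
    (hx : x ∈ D.localizedKer L α) : D.extendToLocalization (Submonoid.powers α) x = 0 := by
  induction hx using Subring.closure_induction with
  | mem y hy =>
    obtain ⟨a, ha, rfl⟩ | rfl := hy
    · simp [extendToLocalization_algebraMap, show D a = 0 from ha]
    · have hu : IsLocalization.Away.invSelf α * algebraMap B L α = 1 := by
        rw [mul_comm, IsLocalization.Away.mul_invSelf]
      rw [leibniz_of_mul_eq_one _ hu, extendToLocalization_algebraMap, hα, map_zero, smul_zero]
  | zero => simp
  | one => simp
  | add _ _ _ _ hx hy => simp [hx, hy]
  | neg _ _ hx => simp [hx]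
  | mul _ _ _ _ hx hy => simp [leibniz, hx, hy]

theorem adjoin_localizedKer_eq_top [Algebra ℚ B] (hln : ∀ b, ∃ n, D^[n] b = 0) {t : B}
    (ht : D (D t) = 0) [IsLocalization.Away (D t) L] :
    Algebra.adjoin (D.localizedKer L (D t)) {algebraMap B L t} = ⊤ := by
  set u := IsLocalization.Away.invSelf (S := L) (D t)
  have hu : algebraMap B L (D t) * u = 1 := IsLocalization.Away.mul_invSelf (D t)
  have hker (a : B) (ha : D a = 0) : algebraMap B L a ∈ D.localizedKer L (D t) :=
    Subring.subset_closure (Or.inl ⟨a, ha, rfl⟩)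
  have huA : u ∈ D.localizedKer L (D t) := Subring.subset_closure (Or.inr rfl)
  refine eq_top_iff.mpr fun x _ => ?_
  obtain ⟨n, b, hx⟩ := IsLocalization.Away.surj (D t) x
  obtain ⟨m, hm⟩ := hln b
  have hxb : x = algebraMap B L b * u ^ n := by
    linear_combination (-x) * (congrArg (· ^ n) hu) + u ^ n * hx
  rw [hxb]
  exact mul_mem (D.algebraMap_mem_adjoin_of_iterate_eq_zero ht hker hu huA m b hm)
    (pow_mem (Subalgebra.algebraMap_mem _ (⟨u, huA⟩ : D.localizedKer L (D t))) n)

theorem transcendental_localizedKer [IsDomain L] [CharZero L] {t : B} (ht : D (D t) = 0)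
    [IsLocalization.Away (D t) L] :
    Transcendental (D.localizedKer L (D t)) (algebraMap B L t) := by
  refine (D.extendToLocalization (Submonoid.powers (D t))).transcendental_of_le_ker
    (fun x hx => D.extendToLocalization_localizedKer ht hx) ?_
  rw [extendToLocalization_algebraMap]
  exact (IsLocalization.Away.algebraMap_isUnit (D t)).ne_zero

end

end Derivation

/-- a nonzero locally nilpotent derivation on a domain containing `ℚ`
has a preslice `t`; and for `α = D t`, one has `B_α = A_α[t]`, a polynomial ring over
`A_α` where `A = ker D`. -/
theorem lnd_preslice (B : Type*) [CommRing B] [IsDomain B] [Algebra ℚ B]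
    (D : Derivation ℤ B B) (hD : D ≠ 0)
    (hln : ∀ b : B, ∃ n : ℕ, (⇑D)^[n] b = 0) :
    (∃ t : B, D t ≠ 0 ∧ D (D t) = 0) ∧
    (∀ t : B, D t ≠ 0 → D (D t) = 0 →
      ∀ (A' : Subring (Localization.Away (D t))),
        A' = Subring.closure
          ((algebraMap B (Localization.Away (D t)) '' {b : B | D b = 0}) ∪
            {IsLocalization.Away.invSelf (S := Localization.Away (D t)) (D t)}) →
        Algebra.adjoin A' {algebraMap B (Localization.Away (D t)) t} = ⊤ ∧
        Transcendental A' (algebraMap B (Localization.Away (D t)) t)) := by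
  refine ⟨?_, fun t ht ht2 A' hA' => ?_⟩
  · obtain ⟨b, hb⟩ := DFunLike.ne_iff.mp hD
    exact D.exists_preslice_of_map_ne_zero hb (hln b)
  subst hA'
  have : IsDomain (Localization.Away (D t)) :=
    IsLocalization.isDomain_localization (powers_le_nonZeroDivisors_of_noZeroDivisors ht)
  have : CharZero (Localization.Away (D t)) :=
    charZero_of_injective_algebraMap (algebraMap ℚ _).injective
  exact ⟨D.adjoin_localizedKer_eq_top hln ht2, D.transcendental_localizedKer ht2⟩
end

section
/- Let n ≥ 2, S = (a₁,…,aₙ) a tuple of positive integers, and M a nonempty subset of {1,…,n}. Define Δ_M(S) = lcm(S) / gcd{ lcm(Sⱼ) : j ∈ M }. Then Δ_M(S) is a positive integer, Δ_M(S) = Δ_{J(S)∩M}(S), and Δ_M(S) = 1 if and only if M ∩ J(S) = ∅. -/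
/-!
Write `L = lcm(S)` and `Lⱼ = lcm(Sⱼ)`, so that every `Lⱼ` divides `L`, and `Lⱼ = L` exactly when
`aⱼ ∣ Lⱼ`, i.e. exactly when `j ∉ J(S)`. Hence the gcd of the `Lⱼ` over `M` divides `L`, the
indices of `M \ J(S)` contribute only the factor `L` and can be dropped from the gcd, and the gcd
equals `L` (that is, `Δ_M(S) = 1`) exactly when every index of `M` lies outside `J(S)`.
-/

/-- `Δ_M(S) = lcm(S) / gcd { lcm(Sⱼ) : j ∈ M }`, with `Δ_∅(S) = 1` by convention. -/
def Delta {n : ℕ} (a : Fin n → ℕ) (M : Finset (Fin n)) : ℕ :=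
  if M = ∅ then 1
  else Finset.univ.lcm a / M.gcd (fun j => (Finset.univ.erase j).lcm a)

open Finset

namespace Finset

variable {ι : Type*} {s t : Finset ι} {f : ι → ℕ}

lemma gcd_eq_gcd_of_subset (hts : t ⊆ s) (h : ∀ j ∈ s, t.gcd f ∣ f j) : s.gcd f = t.gcd f :=
  Nat.dvd_antisymm (gcd_mono hts) (dvd_gcd h)

lemma gcd_eq_iff_forall_eq {L : ℕ} (hs : s.Nonempty) (h : ∀ j ∈ s, f j ∣ L) :
    s.gcd f = L ↔ ∀ j ∈ s, f j = L := by
  refine ⟨fun hg j hj => Nat.dvd_antisymm (h j hj) (hg ▸ gcd_dvd hj), fun hf => ?_⟩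
  obtain ⟨j, hj⟩ := hs
  exact Nat.dvd_antisymm (hf j hj ▸ gcd_dvd hj) (dvd_gcd fun i hi => (hf i hi).symm ▸ dvd_rfl)

lemma lcm_pos {a : ι → ℕ} (ha : ∀ i ∈ s, 0 < a i) : 0 < s.lcm a :=
  Nat.pos_of_ne_zero fun h =>
    let ⟨i, hi, hai⟩ := lcm_eq_zero_iff.mp h
    (ha i hi).ne' hai

lemma dvd_lcm_erase_iff [DecidableEq ι] {a : ι → ℕ} {j : ι} (hj : j ∈ s) :
    a j ∣ (s.erase j).lcm a ↔ (s.erase j).lcm a = s.lcm a := by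
  have hs : s.lcm a = Nat.lcm (a j) ((s.erase j).lcm a) := by
    rw [← insert_erase hj, lcm_insert, erase_insert_eq_erase, erase_idem]
    rfl
  rw [hs, eq_comm, Nat.lcm_eq_right_iff_dvd]

end Finset

section Delta

variable {n : ℕ} {a : Fin n → ℕ}

lemma Delta_of_nonempty {M : Finset (Fin n)} (hM : M.Nonempty) :
    Delta a M = univ.lcm a / M.gcd (fun j => (univ.erase j).lcm a) :=
  if_neg hM.ne_empty

lemma gcd_lcm_erase_dvd_lcm {M : Finset (Fin n)} (hM : M.Nonempty) :
    M.gcd (fun j => (univ.erase j).lcm a) ∣ univ.lcm a :=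
  let ⟨j, hj⟩ := hM
  (gcd_dvd hj).trans (lcm_mono (erase_subset j univ))

lemma gcd_lcm_erase_pos (ha : ∀ i, 0 < a i) {M : Finset (Fin n)} (hM : M.Nonempty) :
    0 < M.gcd (fun j => (univ.erase j).lcm a) :=
  let ⟨_, hj⟩ := hM
  Nat.pos_of_dvd_of_pos (gcd_dvd hj) (lcm_pos fun i _ => ha i)

lemma Delta_pos (ha : ∀ i, 0 < a i) {M : Finset (Fin n)} (hM : M.Nonempty) : 0 < Delta a M := by
  rw [Delta_of_nonempty hM]
  exact Nat.div_pos (Nat.le_of_dvd (lcm_pos fun i _ => ha i) (gcd_lcm_erase_dvd_lcm hM))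
    (gcd_lcm_erase_pos ha hM)

lemma Delta_eq_one_iff (ha : ∀ i, 0 < a i) {M : Finset (Fin n)} (hM : M.Nonempty) :
    Delta a M = 1 ↔ ∀ j ∈ M, (univ.erase j).lcm a = univ.lcm a := by
  rw [← gcd_eq_iff_forall_eq hM fun j _ => lcm_mono (erase_subset j univ), Delta_of_nonempty hM,
    Nat.div_eq_iff_eq_mul_left (gcd_lcm_erase_pos ha hM) (gcd_lcm_erase_dvd_lcm hM), one_mul,
    eq_comm]

lemma Delta_inter_eq (ha : ∀ i, 0 < a i) {J : Finset (Fin n)}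
    (hJ : ∀ j ∉ J, (univ.erase j).lcm a = univ.lcm a) (M : Finset (Fin n)) :
    Delta a (J ∩ M) = Delta a M := by
  rcases M.eq_empty_or_nonempty with rfl | hM
  · simp
  rcases (J ∩ M).eq_empty_or_nonempty with hJM | hJM
  · rw [Delta, if_pos hJM, eq_comm, Delta_eq_one_iff ha hM]
    exact fun j hj => hJ j fun hjJ =>
      eq_empty_iff_forall_notMem.mp hJM j (mem_inter.mpr ⟨hjJ, hj⟩)
  rw [Delta_of_nonempty hM, Delta_of_nonempty hJM]
  congr 1
  refine (gcd_eq_gcd_of_subset inter_subset_right fun j hj => ?_).symm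
  by_cases hjJ : j ∈ J
  · exact gcd_dvd (mem_inter.mpr ⟨hjJ, hj⟩)
  · rw [hJ j hjJ]
    exact gcd_lcm_erase_dvd_lcm hJM

end Delta

theorem delta_props_general (n : ℕ) (a : Fin n → ℕ) (ha : ∀ i, 0 < a i)
    (M : Finset (Fin n)) (hM : M.Nonempty)
    (J : Finset (Fin n))
    (hJ : J = Finset.univ.filter fun j => ¬ a j ∣ (Finset.univ.erase j).lcm a) :
    0 < Delta a M ∧
    (M.gcd fun j => (Finset.univ.erase j).lcm a) ∣ Finset.univ.lcm a ∧
    Delta a M = Delta a (J ∩ M) ∧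
    (Delta a M = 1 ↔ M ∩ J = ∅) := by
  have hJ' : ∀ j, j ∉ J ↔ (univ.erase j).lcm a = univ.lcm a := by
    simp [hJ, dvd_lcm_erase_iff (mem_univ _)]
  refine ⟨Delta_pos ha hM, gcd_lcm_erase_dvd_lcm hM,
    (Delta_inter_eq ha (fun j => (hJ' j).mp) M).symm, ?_⟩
  rw [Delta_eq_one_iff ha hM, eq_empty_iff_forall_notMem]
  simp only [mem_inter, not_and, hJ']

/-- `Δ_M(S)` is a positive integer, `Δ_M(S) = Δ_{J(S)∩M}(S)`, and
`Δ_M(S) = 1 ↔ M ∩ J(S) = ∅`. -/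
theorem delta_props (n : ℕ) (hn : 2 ≤ n) (a : Fin n → ℕ) (ha : ∀ i, 0 < a i)
    (M : Finset (Fin n)) (hM : M.Nonempty)
    (J : Finset (Fin n))
    (hJ : J = Finset.univ.filter fun j => ¬ a j ∣ (Finset.univ.erase j).lcm a) :
    0 < Delta a M ∧
    (M.gcd fun j => (Finset.univ.erase j).lcm a) ∣ Finset.univ.lcm a ∧
    Delta a M = Delta a (J ∩ M) ∧
    (Delta a M = 1 ↔ M ∩ J = ∅) :=
  delta_props_general n a ha M hM J hJ
end
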